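/- arXiv:2410.23930 — 2 statements merged into one kernel-verified Lean document; each statement's English description precedes it below -/
import Mathlib

section
/- Let z ∈ ℂ with z ∉ ℝ (so z ≠ z*). Suppose θ, β ∈ ℝ satisfy (e^{iβ} − 1)/(e^{iθ} − 1) = z with e^{iθ} ≠ 1. Then e^{iβ} = (1 − z)/(1 − z*) and e^{iθ} = (1 − z^{-1})/(1 − (z*)^{-1}), provided z ≠ 0, 1 − z* ≠ 0 and 1 − (z*)^{-1} ≠ 0. -/
open Complex

/-- Scattering relation: if `(e^{iβ} - 1)/(e^{iθ} - 1) = z` with `z` nonreal, then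
`e^{iβ} = (1 - z)/(1 - z*)` and `e^{iθ} = (1 - z⁻¹)/(1 - (z*)⁻¹)`. -/
theorem scattering_exit_formulas (z : ℂ) (hz_nonreal : (starRingEnd ℂ) z ≠ z)
    (θ β : ℝ)
    (hθ1 : Complex.exp (Complex.I * θ) ≠ 1)
    (hmain : (Complex.exp (Complex.I * β) - 1) / (Complex.exp (Complex.I * θ) - 1) = z)
    (hz0 : z ≠ 0)
    (hz1 : 1 - (starRingEnd ℂ) z ≠ 0)
    (hz2 : 1 - ((starRingEnd ℂ) z)⁻¹ ≠ 0) :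
    Complex.exp (Complex.I * β) = (1 - z) / (1 - (starRingEnd ℂ) z) ∧
    Complex.exp (Complex.I * θ) = (1 - z⁻¹) / (1 - ((starRingEnd ℂ) z)⁻¹) := by
  set a : ℂ := Complex.exp (Complex.I * θ) with ha_def
  set b : ℂ := Complex.exp (Complex.I * β) with hb_def
  set c : ℂ := (starRingEnd ℂ) z with hc_def
  have ha0 : a ≠ 0 := Complex.exp_ne_zero _
  have hb0 : b ≠ 0 := Complex.exp_ne_zero _
  have hc0 : c ≠ 0 := by simp [hc_def, hz0]
  have hane : a - 1 ≠ 0 := sub_ne_zero.mpr hθ1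
  have hca : (starRingEnd ℂ) a = a⁻¹ := by
    rw [ha_def, ← Complex.exp_conj, ← Complex.exp_neg]
    congr 1
    simp [map_mul, Complex.conj_I, Complex.conj_ofReal]
  have hcb : (starRingEnd ℂ) b = b⁻¹ := by
    rw [hb_def, ← Complex.exp_conj, ← Complex.exp_neg]
    congr 1
    simp [map_mul, Complex.conj_I, Complex.conj_ofReal]
  have h1 : b - 1 = z * (a - 1) := by
    rw [div_eq_iff hane] at hmain
    linear_combination hmain
  have h2 : b⁻¹ - 1 = c * (a⁻¹ - 1) := by
    have := congrArg (starRingEnd ℂ) h1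
    simpa [map_sub, map_mul, hca, hcb, hc_def] using this
  have h2m : a * (1 - b) = c * b * (1 - a) := by
    field_simp at h2
    linear_combination h2
  have key2 : a * z * (1 - c) = c * (1 - z) := by
    have G0 : (a * z * (1 - c) - c * (1 - z)) * (a - 1) = 0 := by
      linear_combination (c * (a - 1) - a) * h1 - h2m
    rcases mul_eq_zero.mp G0 with h | h
    · linear_combination h
    · exact absurd h hane
  have key1 : b * (1 - c) = 1 - z := by
    linear_combination (1 - c) * h1 + key2
  constructor
  · rw [eq_div_iff hz1]
    exact key1
  · rw [eq_div_iff hz2]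
    field_simp
    linear_combination (-1 : ℂ) * key2
end

section
/- For real x with x > 1, the real part of K_1^+(x) := ∫₀^π [1 − ((x − e^{iφ})/(x − e^{−iφ}))] sin φ dφ equals (1/(2x³))[2(x + x³) − (x² − 1)² ln|(x+1)/(x−1)|]. -/
/-!
Since `e^{iφ} - e^{-iφ} = 2i sin φ`, the integrand of `K_1^+(x)` is
`2i sin²φ / (x - e^{-iφ})`, whose real part is `2 sin³φ / (x² + 1 - 2x cos φ)`. The latter
has an elementary antiderivative (substitute `u = cos φ` and divide polynomials in `u`); at
`φ = 0` and `φ = π` the denominator is `(x - 1)²` and `(x + 1)²`, which produces the logarithm.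
-/

open Complex

/-- `K_m^+(x)`, Fourier-mode damping coefficient of the collision integral. -/
noncomputable def Kp (m : ℤ) (x : ℝ) : ℂ :=
  ∫ φ in (0:ℝ)..Real.pi,
    (1 - (((x : ℂ) - Complex.exp (Complex.I * φ)) /
        ((x : ℂ) - Complex.exp (-(Complex.I * φ)))) ^ m) * (Real.sin φ : ℂ)

/-- `K_m^-(x)`, Fourier-mode damping coefficient of the collision integral. -/
noncomputable def Km (m : ℤ) (x : ℝ) : ℂ :=
  ∫ φ in (0:ℝ)..Real.pi,
    (1 - (((x : ℂ) + Complex.exp (Complex.I * φ)) /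
        ((x : ℂ) + Complex.exp (-(Complex.I * φ)))) ^ m) * (Real.sin φ : ℂ)

lemma exp_I_mul_ofReal (φ : ℝ) :
    exp (I * φ) = (Real.cos φ : ℂ) + (Real.sin φ : ℂ) * I := by
  rw [mul_comm, exp_mul_I, ← ofReal_cos, ← ofReal_sin]

lemma exp_neg_I_mul_ofReal (φ : ℝ) :
    exp (-(I * φ)) = (Real.cos φ : ℂ) - (Real.sin φ : ℂ) * I := by
  rw [← mul_neg, ← ofReal_neg, exp_I_mul_ofReal, Real.cos_neg, Real.sin_neg, ofReal_neg,
    neg_mul, sub_eq_add_neg]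

lemma exp_I_mul_sub_exp_neg_I_mul (φ : ℝ) :
    exp (I * φ) - exp (-(I * φ)) = 2 * Real.sin φ * I := by
  rw [exp_I_mul_ofReal, exp_neg_I_mul_ofReal]; ring

lemma normSq_ofReal_sub_exp_neg_I_mul (x φ : ℝ) :
    normSq ((x : ℂ) - exp (-(I * φ))) = x ^ 2 + 1 - 2 * x * Real.cos φ := by
  rw [exp_neg_I_mul_ofReal, normSq_apply]
  simp only [sub_re, sub_im, ofReal_re, ofReal_im, mul_re, mul_im, I_re, I_im]
  linear_combination Real.sin_sq_add_cos_sq φ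

lemma sq_add_one_sub_two_mul_cos_pos {x : ℝ} (hx : |x| ≠ 1) (φ : ℝ) :
    0 < x ^ 2 + 1 - 2 * x * Real.cos φ := by
  have hcos : x * Real.cos φ ≤ |x| :=
    calc x * Real.cos φ ≤ |x * Real.cos φ| := le_abs_self _
      _ = |x| * |Real.cos φ| := abs_mul _ _
      _ ≤ |x| := mul_le_of_le_one_right (abs_nonneg x) (Real.abs_cos_le_one φ)
  have hsq : 0 < (|x| - 1) ^ 2 := by positivity [sub_ne_zero.2 hx]
  nlinarith [sq_abs x]

lemma ofReal_sub_exp_neg_I_mul_ne_zero {x : ℝ} (hx : |x| ≠ 1) (φ : ℝ) :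
    (x : ℂ) - exp (-(I * φ)) ≠ 0 := by
  rw [← normSq_pos, normSq_ofReal_sub_exp_neg_I_mul]
  exact sq_add_one_sub_two_mul_cos_pos hx φ

lemma re_one_sub_div_mul_sin {x φ : ℝ} (hD : (x : ℂ) - exp (-(I * φ)) ≠ 0) :
    ((1 - ((x : ℂ) - exp (I * φ)) / ((x : ℂ) - exp (-(I * φ)))) * (Real.sin φ : ℂ)).re
      = 2 * Real.sin φ ^ 3 / (x ^ 2 + 1 - 2 * x * Real.cos φ) := by
  have hnum : 1 - ((x : ℂ) - exp (I * φ)) / ((x : ℂ) - exp (-(I * φ)))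
      = 2 * Real.sin φ * I / ((x : ℂ) - exp (-(I * φ))) := by
    rw [← exp_I_mul_sub_exp_neg_I_mul]; field_simp; ring
  rw [hnum, re_mul_ofReal, div_re, normSq_ofReal_sub_exp_neg_I_mul, exp_neg_I_mul_ofReal]
  simp only [mul_re, mul_im, sub_im, ofReal_re, ofReal_im, I_re, I_im, re_ofNat, im_ofNat]
  ring

lemma re_Kp_one {x : ℝ} (hx : |x| ≠ 1) :
    (Kp 1 x).re =
      ∫ φ in (0 : ℝ)..Real.pi, 2 * Real.sin φ ^ 3 / (x ^ 2 + 1 - 2 * x * Real.cos φ) := by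
  have hD := ofReal_sub_exp_neg_I_mul_ne_zero hx
  have hcont : Continuous fun φ : ℝ =>
      (1 - ((x : ℂ) - exp (I * φ)) / ((x : ℂ) - exp (-(I * φ)))) * (Real.sin φ : ℂ) := by
    fun_prop (disch := exact hD)
  simp only [Kp, zpow_one]
  rw [← reCLM_apply, ← reCLM.intervalIntegral_comp_comm (hcont.intervalIntegrable _ _)]
  exact intervalIntegral.integral_congr fun φ _ => re_one_sub_div_mul_sin (hD φ)

lemma hasDerivAt_sin_pow_three_div {x φ : ℝ} (hx : x ≠ 0)
    (hD : x ^ 2 + 1 - 2 * x * Real.cos φ ≠ 0) :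
    HasDerivAt (fun φ => -(Real.cos φ ^ 2 / (2 * x) + (x ^ 2 + 1) * Real.cos φ / (2 * x ^ 2)
        + (x ^ 2 - 1) ^ 2 / (4 * x ^ 3) * Real.log (x ^ 2 + 1 - 2 * x * Real.cos φ)))
      (2 * Real.sin φ ^ 3 / (x ^ 2 + 1 - 2 * x * Real.cos φ)) φ := by
  have hcos := Real.hasDerivAt_cos φ
  have hlog := ((hcos.const_mul (2 * x)).const_sub (x ^ 2 + 1)).log hD
  refine (((((hcos.pow 2).div_const (2 * x)).add ((hcos.const_mul (x ^ 2 + 1)).div_const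
    (2 * x ^ 2))).add (hlog.const_mul ((x ^ 2 - 1) ^ 2 / (4 * x ^ 3)))).neg).congr_deriv ?_
  field_simp
  linear_combination (-(16 * x ^ 2 * Real.sin φ)) * Real.sin_sq_add_cos_sq φ

lemma integral_sin_pow_three_div {x : ℝ} (hx : 1 < x) :
    ∫ φ in (0 : ℝ)..Real.pi, 2 * Real.sin φ ^ 3 / (x ^ 2 + 1 - 2 * x * Real.cos φ)
      = (x ^ 2 + 1) / x ^ 2 - (x ^ 2 - 1) ^ 2 / (2 * x ^ 3) * Real.log ((x + 1) / (x - 1)) := by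
  have hD := sq_add_one_sub_two_mul_cos_pos (by rw [abs_of_pos (by linarith)]; exact hx.ne')
  have hcont : Continuous fun φ => 2 * Real.sin φ ^ 3 / (x ^ 2 + 1 - 2 * x * Real.cos φ) := by
    fun_prop (disch := exact fun φ => (hD φ).ne')
  rw [intervalIntegral.integral_eq_sub_of_hasDerivAt
    (fun φ _ => hasDerivAt_sin_pow_three_div (by positivity) (hD φ).ne')
    (hcont.intervalIntegrable _ _)]
  have hπ : x ^ 2 + 1 - 2 * x * Real.cos Real.pi = (x + 1) ^ 2 := by rw [Real.cos_pi]; ring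
  have h0 : x ^ 2 + 1 - 2 * x * Real.cos 0 = (x - 1) ^ 2 := by rw [Real.cos_zero]; ring
  rw [hπ, h0, Real.log_pow, Real.log_pow, Real.cos_pi, Real.cos_zero,
    Real.log_div (by linarith) (by linarith)]
  field_simp
  ring

theorem K_one_re (x : ℝ) (hx : 1 < x) :
    (Kp 1 x).re = (1 / (2 * x ^ 3)) *
      (2 * (x + x ^ 3) - (x ^ 2 - 1) ^ 2 * Real.log |(x + 1) / (x - 1)|) := by
  rw [re_Kp_one (by rw [abs_of_pos (by linarith)]; exact hx.ne'), integral_sin_pow_three_div hx,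
    abs_of_pos (div_pos (by linarith) (by linarith))]
  field_simp
  ring
end
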